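/- Let δ ∈ (0,1) and fix s = b+c ∈ (0,1). Consider the equation (d/a)^{(1−δ)/2} = [ (1 + (δ^{−2}−1)a) / (1 + (δ^{−2}−1)d) ]^{(1+δ)/2} for a,d > 0 with a + d = 1 − s. Then the only solution is a = d. -/

import Mathlib

/-! If `a < d` the left-hand side exceeds `1` while the right-hand side is at most `1`,
since `δ⁻² - 1 ≥ 0`; if `d < a` both inequalities reverse. -/

open Real

theorem eq_of_div_rpow_eq_one_add_mul_div_rpow {a d k p q : ℝ} (ha : 0 < a) (hd : 0 < d)
    (hk : 0 ≤ k) (hp : 0 < p) (hq : 0 ≤ q)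
    (h : (d / a) ^ p = ((1 + k * a) / (1 + k * d)) ^ q) : a = d := by
  have hka : 0 < 1 + k * a := by positivity
  have hkd : 0 < 1 + k * d := by positivity
  rcases lt_trichotomy a d with had | rfl | hda
  · have hlhs : 1 < (d / a) ^ p := one_lt_rpow ((one_lt_div ha).2 had) hp
    have hrhs : ((1 + k * a) / (1 + k * d)) ^ q ≤ 1 :=
      rpow_le_one (by positivity) ((div_le_one hkd).2 (by nlinarith)) hq
    linarith
  · rfl
  · have hlhs : (d / a) ^ p < 1 := rpow_lt_one (by positivity) ((div_lt_one ha).2 hda) hp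
    have hrhs : 1 ≤ ((1 + k * a) / (1 + k * d)) ^ q :=
      one_le_rpow ((one_le_div hkd).2 (by nlinarith)) hq
    linarith

theorem symmetric_solution_unique (δ a d : ℝ) (hδ : δ ∈ Set.Ioo (0:ℝ) 1)
    (ha : 0 < a) (hd : 0 < d)
    (heq : (d/a) ^ ((1-δ)/2) =
      ((1 + (1/δ^2 - 1)*a) / (1 + (1/δ^2 - 1)*d)) ^ ((1+δ)/2)) :
    a = d := by
  obtain ⟨hδ0, hδ1⟩ := hδ
  have hk : 0 ≤ 1 / δ ^ 2 - 1 := by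
    rw [sub_nonneg, le_div_iff₀ (by positivity)]
    nlinarith
  exact eq_of_div_rpow_eq_one_add_mul_div_rpow ha hd hk (by linarith) (by linarith) heq
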